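/- arXiv:1206.6607 — 2 statements merged into one kernel-verified Lean document; each statement's English description precedes it below -/
import Mathlib

section
/- Let X be an indecomposable quandle and X' = {t} a singleton subrack with #X ≥ 3. Then there exist r, s ∈ X \ {t} with r ▷ s = t; consequently g_t = g_r g_s g_r^{-1} in Inn X and X \ {t} generates Inn X. -/
/-! Since `Inn X` moves `t`, some generator `g r` with `r ≠ t` moves `t` (idempotence rules out
`g t`). Then `s := (g r)⁻¹ t` differs from `t`, satisfies `r ▷ s = t`, and self-distributivity
gives `g t = g (r ▷ s) = g r * g s * (g r)⁻¹`, so `g t` lies in the subgroup generated by the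
other generators. -/

section LeftMultiplications

variable {X : Type*} (g : X → Equiv.Perm X)

theorem conj_eq_of_selfDistrib (hdist : ∀ t s r : X, g t (g s r) = g (g t s) (g t r))
    (a b : X) : g (g a b) = g a * g b * (g a)⁻¹ := by
  ext x
  simpa [Equiv.Perm.mul_apply] using (hdist a b ((g a)⁻¹ x)).symm

theorem closure_range_le_stabilizer {t : X} (hfix : ∀ a, g a t = t) :
    Subgroup.closure (Set.range g) ≤ MulAction.stabilizer (Equiv.Perm X) t := by
  rw [Subgroup.closure_le]
  rintro _ ⟨a, rfl⟩
  exact hfix a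

theorem exists_ne_apply_ne [Nontrivial X] (hidem : ∀ t : X, g t t = t)
    (htrans : ∀ x y : X, ∃ h ∈ Subgroup.closure (Set.range g), h x = y) (t : X) :
    ∃ r, r ≠ t ∧ g r t ≠ t := by
  by_contra! hcon
  have hfix : ∀ a, g a t = t := fun a => by
    by_cases ha : a = t
    · exact ha ▸ hidem a
    · exact hcon a ha
  obtain ⟨y, hyt⟩ := exists_ne t
  obtain ⟨h, hh, rfl⟩ := htrans t y
  exact hyt (closure_range_le_stabilizer g hfix hh)

theorem closure_image_ne_eq_closure_range {t : X}
    (ht : g t ∈ Subgroup.closure (g '' {x | x ≠ t})) :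
    Subgroup.closure (g '' {x | x ≠ t}) = Subgroup.closure (Set.range g) := by
  refine le_antisymm (Subgroup.closure_mono (Set.image_subset_range _ _)) ?_
  rw [Subgroup.closure_le]
  rintro _ ⟨x, rfl⟩
  by_cases hx : x = t
  · exact hx ▸ ht
  · exact Subgroup.subset_closure ⟨x, hx, rfl⟩

end LeftMultiplications

/-- For an indecomposable quandle `X` with at least 3 elements (encoded by
`g : X → Equiv.Perm X`, `g t s = t ▷ s`) and `t ∈ X`, there exist
`r, s ∈ X \ {t}` with `r ▷ s = t`; consequently `g t = g r * g s * (g r)⁻¹`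
and `X \ {t}` generates the inner group. -/
theorem singleton_complement_generates_inner_group {X : Type*}
    (hcard : 3 ≤ Nat.card X)
    (g : X → Equiv.Perm X)
    (hdist : ∀ t s r : X, g t (g s r) = g (g t s) (g t r))
    (hidem : ∀ t : X, g t t = t)
    (htrans : ∀ x y : X, ∃ h ∈ Subgroup.closure (Set.range g), h x = y)
    (t : X) :
    ∃ r s : X, r ≠ t ∧ s ≠ t ∧ g r s = t ∧
      g t = g r * g s * (g r)⁻¹ ∧
      Subgroup.closure (g '' {x : X | x ≠ t}) = Subgroup.closure (Set.range g) := by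
  have : Nontrivial X := by
    have : Finite X := Nat.finite_of_card_ne_zero (by omega)
    exact Finite.one_lt_card_iff_nontrivial.mp (by omega)
  obtain ⟨r, hrt, hrt_moved⟩ := exists_ne_apply_ne g hidem htrans t
  set s := (g r)⁻¹ t
  have hrs : g r s = t := by simp [s]
  have hst : s ≠ t := fun h => hrt_moved (h ▸ hrs)
  have hconj : g t = g r * g s * (g r)⁻¹ := hrs ▸ conj_eq_of_selfDistrib g hdist r s
  have hgen : ∀ x, x ≠ t → g x ∈ Subgroup.closure (g '' {x | x ≠ t}) :=
    fun x hx => Subgroup.subset_closure ⟨x, hx, rfl⟩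
  refine ⟨r, s, hrt, hst, hrs, hconj, closure_image_ne_eq_closure_range g ?_⟩
  rw [hconj]
  exact mul_mem (mul_mem (hgen r hrt) (hgen s hst)) (inv_mem (hgen r hrt))
end

section
/- Let B be an N₀-graded vector space with a linear map φ such that φ maps B(j) into B(j+1) ⊕ B(j−m+1) for all j (interpreting B(negative) = 0), and such that φ is bijective. Then for each residue class [j]_m ∈ Z/mZ, φ restricts to a linear isomorphism from B([j]_m) := ⊕_{i ≡ j mod m} B(i) onto B([j+1]_m); consequently dim B([j]_m) = dim B / m for all classes when B is finite-dimensional, i.e. B is C_m-balanced. -/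
/-!
Coarsening the `ℕ`-grading of `B` modulo `m` gives a `ℤ/mℤ`-grading `B([k]_m)`, and the
condition on `φ` says exactly that `φ` maps `B([k]_m)` into `B([k+1]_m)`. Since `φ` is
injective, `k ↦ dim B([k]_m)` is then non-decreasing along the cycle `ℤ/mℤ`, hence constant.
So each inclusion `φ(B([k]_m)) ≤ B([k+1]_m)` is an equality of dimensions, and the `m` equal
summands of `B = ⨁ₖ B([k]_m)` each have dimension `dim B / m`.
-/

open Module

theorem ZMod.apply_eq_apply_of_le_apply_add_one {m : ℕ} [NeZero m] {α : Type*} [PartialOrder α]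
    {f : ZMod m → α} (hf : ∀ k, f k ≤ f (k + 1)) (a b : ZMod m) : f a = f b := by
  have hle : ∀ a b, f a ≤ f b := by
    intro a b
    have hstep : ∀ n : ℕ, f a ≤ f (a + n) := by
      intro n
      induction n with
      | zero => simp
      | succ n ih => exact ih.trans (by simpa [add_assoc] using hf (a + n))
    simpa using hstep (b - a).val
  exact le_antisymm (hle a b) (hle b a)

theorem iSupIndep.iSup_fiber {α ι κ : Type*} [CompleteLattice α] [IsModularLattice α]
    [IsCompactlyGenerated α] {t : ι → α} (ht : iSupIndep t) (g : ι → κ) :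
    iSupIndep fun k => ⨆ i, ⨆ _ : g i = k, t i := by
  intro k
  refine (ht.disjoint_biSup_biSup (s := {i | g i = k}) (t := {i | g i ≠ k})
    (Set.disjoint_left.2 fun _ hi hi' => hi' hi)).mono_right ?_
  exact iSup₂_le fun k' hk' => iSup₂_le fun i hi =>
    le_iSup₂_of_le (f := fun i (_ : i ∈ {i | g i ≠ k}) => t i) i (hi.trans_ne hk') le_rfl

theorem iSup_iSup_fiber {α ι κ : Type*} [CompleteLattice α] (t : ι → α) (g : ι → κ) :
    ⨆ k, ⨆ i, ⨆ _ : g i = k, t i = ⨆ i, t i := by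
  rw [iSup_comm]
  simp only [iSup_iSup_eq_right]

namespace DirectSum.IsInternal

theorem iSup_fiber {R M ι κ : Type*} [Ring R] [AddCommGroup M] [Module R M] [DecidableEq ι]
    [DecidableEq κ] {B : ι → Submodule R M} (hB : IsInternal B) (g : ι → κ) :
    IsInternal fun k => ⨆ i, ⨆ _ : g i = k, B i :=
  isInternal_submodule_of_iSupIndep_of_iSup_eq_top (hB.submodule_iSupIndep.iSup_fiber g)
    ((iSup_iSup_fiber B g).trans hB.submodule_iSup_eq_top)

theorem finrank_eq_sum {K V ι : Type*} [DivisionRing K] [AddCommGroup V] [Module K V]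
    [FiniteDimensional K V] [Fintype ι] [DecidableEq ι] {G : ι → Submodule K V}
    (hG : IsInternal G) : finrank K V = ∑ i, finrank K (G i) := by
  rw [← (LinearEquiv.ofBijective (DirectSum.coeLinearMap G) hG).finrank_eq, finrank_directSum]

end DirectSum.IsInternal

namespace LinearEquiv

variable {K V : Type*} [DivisionRing K] [AddCommGroup V] [Module K V] [FiniteDimensional K V]
  {m : ℕ} [NeZero m] (φ : V ≃ₗ[K] V) {G : ZMod m → Submodule K V}

theorem finrank_eq_of_map_le_add_one (hG : ∀ k, (G k).map φ.toLinearMap ≤ G (k + 1))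
    (a b : ZMod m) : finrank K (G a) = finrank K (G b) :=
  ZMod.apply_eq_apply_of_le_apply_add_one
    (fun k => (φ.finrank_map_eq (G k)).symm.le.trans (Submodule.finrank_mono (hG k))) a b

theorem map_eq_of_map_le_add_one (hG : ∀ k, (G k).map φ.toLinearMap ≤ G (k + 1))
    (k : ZMod m) : (G k).map φ.toLinearMap = G (k + 1) :=
  Submodule.eq_of_le_of_finrank_le (hG k) <| by
    rw [φ.finrank_map_eq, φ.finrank_eq_of_map_le_add_one hG]

end LinearEquiv

section ModGrading

variable {R M : Type*} [Semiring R] [AddCommMonoid M] [Module R M] (B : ℕ → Submodule R M)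
  (m : ℕ)

def modGrading (k : ZMod m) : Submodule R M :=
  ⨆ j : ℕ, ⨆ _ : (j : ZMod m) = k, B j

theorem modGrading_natCast (l : ℕ) :
    modGrading B m l = ⨆ j : ℕ, ⨆ _ : j % m = l % m, B j := by
  simp only [modGrading, ZMod.natCast_eq_natCast_iff']

theorem le_modGrading (j : ℕ) : B j ≤ modGrading B m j :=
  le_iSup₂_of_le (f := fun (i : ℕ) (_ : (i : ZMod m) = j) => B i) j rfl le_rfl

variable {B m}

theorem map_modGrading_le {f : M →ₗ[R] M} (hf : ∀ j : ℕ, (B j).map f ≤ modGrading B m (j + 1))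
    (k : ZMod m) : (modGrading B m k).map f ≤ modGrading B m (k + 1) := by
  simp only [modGrading, Submodule.map_iSup]
  exact iSup₂_le fun j hj => hj ▸ hf j

end ModGrading

theorem isInternal_modGrading {R M : Type*} [Ring R] [AddCommGroup M] [Module R M]
    (B : ℕ → Submodule R M) [DirectSum.Decomposition B] (m : ℕ) :
    DirectSum.IsInternal (modGrading B m) := by
  classical
  exact (DirectSum.Decomposition.isInternal B).iSup_fiber _

/-- `C_m`-balanced lemma: if the bijective linear map `φ` sends each graded
component `B(j)` into `B(j+1) ⊕ B(j-m+1)` (with `B` of negative degree being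
zero), then `φ` restricts to an isomorphism `B([j]_m) ≅ B([j+1]_m)` of the
mod-`m` components, and each mod-`m` component has dimension `dim B / m`. -/
theorem quotient_grading_balanced {F M : Type*} [Field F] [AddCommGroup M]
    [Module F M] [FiniteDimensional F M]
    (B : ℕ → Submodule F M) [DirectSum.Decomposition B]
    (m : ℕ) (hm : 0 < m) (φ : M ≃ₗ[F] M)
    (hφ : ∀ j : ℕ, ∀ x ∈ B j, φ x ∈
      B (j + 1) ⊔ (if m ≤ j + 1 then B (j + 1 - m) else ⊥)) :
    (∀ l : ℕ,
      Submodule.map φ.toLinearMap (⨆ j : ℕ, ⨆ _ : j % m = l % m, B j)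
        = ⨆ j : ℕ, ⨆ _ : j % m = (l + 1) % m, B j) ∧
    (∀ l : ℕ,
      m * finrank F ↥(⨆ j : ℕ, ⨆ _ : j % m = l % m, B j) = finrank F M) := by
  have : NeZero m := ⟨hm.ne'⟩
  have hshift : ∀ j : ℕ, (B j).map φ.toLinearMap ≤ modGrading B m (j + 1) := by
    rintro j _ ⟨x, hx, rfl⟩
    refine (sup_le ?_ ?_ : _ ≤ modGrading B m (j + 1)) (hφ j x hx)
    · simpa using le_modGrading B m (j + 1)
    · split_ifs with h
      · simpa [Nat.cast_sub h] using le_modGrading B m (j + 1 - m)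
      · exact bot_le
  have hcycle := map_modGrading_le hshift
  refine ⟨fun l => ?_, fun l => ?_⟩
  · simpa [← modGrading_natCast] using φ.map_eq_of_map_le_add_one hcycle l
  · rw [← modGrading_natCast, (isInternal_modGrading B m).finrank_eq_sum,
      Finset.sum_congr rfl fun k _ => φ.finrank_eq_of_map_le_add_one hcycle k l]
    simp
end
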